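/- arXiv:2308.11904 — 3 statements merged into one kernel-verified Lean document; each statement's English description precedes it below -/
import Mathlib

section
/- Let A be an n×n real symmetric positive semidefinite matrix, B an n×n real symmetric positive definite matrix, let y ∈ ℝⁿ be nonzero with y_i = 0 for some index i, and define R̃(α) = R(y + α e_i) for α ∈ ℝ. Then R̃ is differentiable at every α ∈ ℝ and its derivative equals R̃'(α) = 2·(q₁₂ α² + q₁₃ α + q₂₃) / (B_{ii}α² + 2(By)_i α + yᵀBy)², where q₁₂ = A_{ii}(By)_i − B_{ii}(Ay)_i, q₁₃ = A_{ii}(yᵀBy) − B_{ii}(yᵀAy), and q₂₃ = (Ay)_i(yᵀBy) − (By)_i(yᵀAy). -/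
/-!
Along the line `β ↦ y + β e_i` both quadratic forms are quadratic polynomials in `β`, with
coefficients `M_ii`, `2 (My)_i` and `yᵀMy` by symmetry of `M`. The quotient rule for two such
quadratics gives the formula; the denominator does not vanish because `B` is positive definite
and `y + α e_i ≠ 0`, as `y ≠ 0` and `y_i = 0`.
-/

open Matrix

namespace Matrix

variable {m R : Type*} [Fintype m] [CommRing R]

theorem IsSymm.dotProduct_mulVec_comm {M : Matrix m m R} (hM : M.IsSymm) (v w : m → R) :
    v ⬝ᵥ M *ᵥ w = w ⬝ᵥ M *ᵥ v := by
  rw [dotProduct_mulVec, ← mulVec_transpose, hM.eq, dotProduct_comm]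

theorem IsSymm.add_smul_dotProduct_mulVec {M : Matrix m m R} (hM : M.IsSymm)
    (y v : m → R) (β : R) :
    (y + β • v) ⬝ᵥ M *ᵥ (y + β • v) =
      (v ⬝ᵥ M *ᵥ v) * β ^ 2 + 2 * (v ⬝ᵥ M *ᵥ y) * β + y ⬝ᵥ M *ᵥ y := by
  simp only [mulVec_add, mulVec_smul, dotProduct_add, add_dotProduct, smul_dotProduct,
    dotProduct_smul, smul_eq_mul, hM.dotProduct_mulVec_comm y v]
  ring

theorem IsSymm.add_smul_single_dotProduct_mulVec [DecidableEq m] {M : Matrix m m R}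
    (hM : M.IsSymm) (y : m → R) (i : m) (β : R) :
    (y + β • Pi.single i 1) ⬝ᵥ M *ᵥ (y + β • Pi.single i 1) =
      M i i * β ^ 2 + 2 * (M *ᵥ y) i * β + y ⬝ᵥ M *ᵥ y := by
  rw [hM.add_smul_dotProduct_mulVec, single_dotProduct, single_dotProduct, mulVec_single_one]
  simp only [one_mul, col_apply]

end Matrix

theorem add_smul_single_ne_zero {m R : Type*} [DecidableEq m] [Semiring R] {y : m → R}
    (hy : y ≠ 0) {i : m} (hyi : y i = 0) (α : R) : y + α • Pi.single i 1 ≠ 0 := by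
  intro h
  have hα : α = 0 := by simpa [hyi] using congrFun h i
  exact hy (by simpa [hα] using h)

section Quadratic

variable {𝕜 : Type*} [NontriviallyNormedField 𝕜]

theorem hasDerivAt_quadratic (a b c α : 𝕜) :
    HasDerivAt (fun β => a * β ^ 2 + 2 * b * β + c) (2 * (a * α + b)) α := by
  refine ((((hasDerivAt_pow 2 α).const_mul a).add
    ((hasDerivAt_id α).const_mul (2 * b))).add_const c).congr_deriv ?_
  ring

theorem hasDerivAt_quadratic_div_quadratic {a b c d e f α : 𝕜}
    (hα : d * α ^ 2 + 2 * e * α + f ≠ 0) :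
    HasDerivAt (fun β => (a * β ^ 2 + 2 * b * β + c) / (d * β ^ 2 + 2 * e * β + f))
      (2 * ((a * e - d * b) * α ^ 2 + (a * f - d * c) * α + (b * f - e * c)) /
        (d * α ^ 2 + 2 * e * α + f) ^ 2) α := by
  refine ((hasDerivAt_quadratic a b c α).div (hasDerivAt_quadratic d e f α) hα).congr_deriv ?_
  ring

end Quadratic

/-- The univariate function `R̃(α) = R(y + α e_i)` is differentiable everywhere, with
derivative `2(q₁₂α² + q₁₃α + q₂₃)/(B_{ii}α² + 2(By)_i α + yᵀBy)²`. -/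
theorem rayleigh_hasDerivAt {n : ℕ} (A B : Matrix (Fin n) (Fin n) ℝ)
    (hA : A.PosSemidef) (hB : B.PosDef) (y : Fin n → ℝ) (hy : y ≠ 0)
    (i : Fin n) (hyi : y i = 0) :
    ∀ α : ℝ,
      HasDerivAt (fun β : ℝ =>
          ((y + β • (Pi.single i 1 : Fin n → ℝ)) ⬝ᵥ
              A.mulVec (y + β • (Pi.single i 1 : Fin n → ℝ))) /
            ((y + β • (Pi.single i 1 : Fin n → ℝ)) ⬝ᵥ
              B.mulVec (y + β • (Pi.single i 1 : Fin n → ℝ))))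
        (2 * ((A i i * B.mulVec y i - B i i * A.mulVec y i) * α ^ 2
            + (A i i * (y ⬝ᵥ B.mulVec y) - B i i * (y ⬝ᵥ A.mulVec y)) * α
            + (A.mulVec y i * (y ⬝ᵥ B.mulVec y) - B.mulVec y i * (y ⬝ᵥ A.mulVec y))) /
          (B i i * α ^ 2 + 2 * B.mulVec y i * α + y ⬝ᵥ B.mulVec y) ^ 2)
        α := by
  intro α
  have hAsymm : A.IsSymm := isHermitian_iff_isSymm.mp hA.isHermitian
  have hBsymm : B.IsSymm := isHermitian_iff_isSymm.mp hB.isHermitian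
  have hden : B i i * α ^ 2 + 2 * B.mulVec y i * α + y ⬝ᵥ B.mulVec y ≠ 0 := by
    rw [← hBsymm.add_smul_single_dotProduct_mulVec]
    exact (hB.dotProduct_mulVec_pos (add_smul_single_ne_zero hy hyi α)).ne'
  simp only [hAsymm.add_smul_single_dotProduct_mulVec, hBsymm.add_smul_single_dotProduct_mulVec]
  exact hasDerivAt_quadratic_div_quadratic hden
end

section
/- Let A be an n×n real symmetric positive semidefinite matrix, B an n×n real symmetric positive definite matrix, let y ∈ ℝⁿ be nonzero with y_i = 0 for some index i, and define q₁₂ = A_{ii}(By)_i − B_{ii}(Ay)_i, q₁₃ = A_{ii}(yᵀBy) − B_{ii}(yᵀAy), and q₂₃ = (Ay)_i(yᵀBy) − (By)_i(yᵀAy). If q₁₂ ≠ 0, then the discriminant q₁₃² − 4·q₁₂·q₂₃ of the quadratic q₁₂α² + q₁₃α + q₂₃ is strictly positive. -/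
/-! Write `a = A i i`, `p = (A y) i`, `s = yᵀAy`, `b = B i i`, `q = (B y) i`, `t = yᵀBy` and
`u = q₁₂ = a q - b p`. Then `b² (q₁₃² - 4 q₁₂ q₂₃) = (b q₁₃ - 2 q u)² + 4 u² (b t - q²)`, and
`b t - q² > 0` is the strict Cauchy–Schwarz inequality for the inner product defined by `B`,
applied to `eᵢ` and `y`, which are independent because `y i = 0`. -/

open Matrix

theorem LinearIndependent.pair_single_of_apply_eq_zero {ι K : Type*} [DecidableEq ι] [Ring K]
    [NoZeroDivisors K] {y : ι → K} (hy : y ≠ 0) {i : ι} (hyi : y i = 0) :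
    LinearIndependent K ![Pi.single i 1, y] := by
  refine LinearIndependent.pair_iff.mpr fun s t hst => ?_
  have hs : s = 0 := by simpa [hyi] using congrFun hst i
  subst hs
  exact ⟨rfl, (smul_eq_zero.mp (by simpa using hst)).resolve_right hy⟩

namespace Matrix.PosDef

variable {ι : Type*} [Fintype ι] {B : Matrix ι ι ℝ}

theorem sq_dotProduct_mulVec_lt (hB : B.PosDef) {x y : ι → ℝ}
    (hxy : LinearIndependent ℝ ![x, y]) :
    (x ⬝ᵥ B *ᵥ y) ^ 2 < (x ⬝ᵥ B *ᵥ x) * (y ⬝ᵥ B *ᵥ y) := by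
  have hxx : 0 < x ⬝ᵥ B *ᵥ x := by
    simpa using hB.dotProduct_mulVec_pos (hxy.ne_zero 0)
  have hsymm : y ⬝ᵥ B *ᵥ x = x ⬝ᵥ B *ᵥ y := by
    rw [← dotProduct_transpose_mulVec, (isHermitian_iff_isSymm.mp hB.1).eq]
  set z := (x ⬝ᵥ B *ᵥ x) • y - (x ⬝ᵥ B *ᵥ y) • x
  have hz : z ≠ 0 := fun h =>
    hxx.ne' (LinearIndependent.pair_iff.mp hxy (-(x ⬝ᵥ B *ᵥ y)) _ (by rw [← h]; module)).2
  have hzz : z ⬝ᵥ B *ᵥ z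
      = (x ⬝ᵥ B *ᵥ x) * ((x ⬝ᵥ B *ᵥ x) * (y ⬝ᵥ B *ᵥ y) - (x ⬝ᵥ B *ᵥ y) ^ 2) := by
    simp only [z, mulVec_sub, mulVec_smul, dotProduct_sub, sub_dotProduct, dotProduct_smul,
      smul_dotProduct, smul_eq_mul, hsymm]
    ring
  have hpos : 0 < z ⬝ᵥ B *ᵥ z := by simpa using hB.dotProduct_mulVec_pos hz
  rw [hzz] at hpos
  exact sub_pos.mp (pos_of_mul_pos_right hpos hxx.le)

end Matrix.PosDef

theorem discrim_pos_of_sq_lt_mul {R : Type*} [CommRing R] [LinearOrder R]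
    [IsStrictOrderedRing R] {a b p q s t : R} (hqt : q ^ 2 < b * t) (hu : a * q - b * p ≠ 0) :
    0 < discrim (a * q - b * p) (a * t - b * s) (p * t - q * s) := by
  have key : b ^ 2 * discrim (a * q - b * p) (a * t - b * s) (p * t - q * s)
      = (b * (a * t - b * s) - 2 * q * (a * q - b * p)) ^ 2
        + 4 * (a * q - b * p) ^ 2 * (b * t - q ^ 2) := by
    unfold discrim; ring
  have : 0 < b ^ 2 * discrim (a * q - b * p) (a * t - b * s) (p * t - q * s) := by
    rw [key]
    have hgap := sub_pos.mpr hqt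
    positivity
  exact pos_of_mul_pos_right this (sq_nonneg b)

theorem rayleigh_discriminant_pos_general {n : ℕ} (A B : Matrix (Fin n) (Fin n) ℝ)
    (hB : B.PosDef) (y : Fin n → ℝ) (hy : y ≠ 0)
    (i : Fin n) (hyi : y i = 0)
    (hq12 : A i i * B.mulVec y i - B i i * A.mulVec y i ≠ 0) :
    0 < (A i i * (y ⬝ᵥ B.mulVec y) - B i i * (y ⬝ᵥ A.mulVec y)) ^ 2
        - 4 * (A i i * B.mulVec y i - B i i * A.mulVec y i)
            * (A.mulVec y i * (y ⬝ᵥ B.mulVec y) - B.mulVec y i * (y ⬝ᵥ A.mulVec y)) := by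
  have hCS := hB.sq_dotProduct_mulVec_lt (.pair_single_of_apply_eq_zero hy hyi)
  simp only [single_one_dotProduct, mulVec_single_one] at hCS
  simpa [discrim] using discrim_pos_of_sq_lt_mul hCS hq12

/-- If `q₁₂ ≠ 0`, the discriminant `q₁₃² − 4 q₁₂ q₂₃` is strictly positive. -/
theorem rayleigh_discriminant_pos {n : ℕ} (A B : Matrix (Fin n) (Fin n) ℝ)
    (hA : A.PosSemidef) (hB : B.PosDef) (y : Fin n → ℝ) (hy : y ≠ 0)
    (i : Fin n) (hyi : y i = 0)
    (hq12 : A i i * B.mulVec y i - B i i * A.mulVec y i ≠ 0) :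
    0 < (A i i * (y ⬝ᵥ B.mulVec y) - B i i * (y ⬝ᵥ A.mulVec y)) ^ 2
        - 4 * (A i i * B.mulVec y i - B i i * A.mulVec y i)
            * (A.mulVec y i * (y ⬝ᵥ B.mulVec y) - B.mulVec y i * (y ⬝ᵥ A.mulVec y)) :=
  rayleigh_discriminant_pos_general A B hB y hy i hyi hq12
end

section
/- Let x, x' ∈ ℝⁿ and let s be a positive integer. Suppose ‖x‖₀ = s, ‖x'‖₀ ≤ s, and supp(x') ≠ supp(x). Then ‖x' − x‖₂ ≥ min_{j ∈ supp(x)} |x_j| > 0, where ‖·‖₂ denotes the Euclidean norm. -/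
/-! Since `supp x'` is no larger than `supp x` and differs from it, some `j ∈ supp x` lies outside
`supp x'`; the `j`-th coordinate of `x' - x` is then `-x j`, and a coordinate is bounded by the
Euclidean norm. -/

theorem Set.exists_mem_notMem_of_ncard_le_of_ne {α : Type*} {s t : Set α}
    (h : t.ncard ≤ s.ncard) (hne : t ≠ s) (ht : t.Finite := by toFinite_tac) :
    ∃ j ∈ s, j ∉ t := by
  by_contra! hsub
  exact hne (Set.eq_of_subset_of_ncard_le hsub h ht).symm

theorem PiLp.norm_apply_le_norm_sub_of_apply_eq_zero {p : ENNReal} [Fact (1 ≤ p)] {ι : Type*} [Fintype ι]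
    {β : ι → Type*} [∀ i, SeminormedAddCommGroup (β i)] {x y : PiLp p β} {i : ι}
    (hy : y i = 0) : ‖x i‖ ≤ ‖y - x‖ := by
  simpa [hy] using PiLp.norm_apply_le (y - x) i

theorem dist_ge_min_abs_of_support_ne_general {n : ℕ} (s : ℕ)
    (x x' : EuclideanSpace ℝ (Fin n))
    (hx : (Function.support x).ncard = s)
    (hx' : (Function.support x').ncard ≤ s)
    (hsupp : Function.support x' ≠ Function.support x) :
    sInf ((fun j => |x j|) '' Function.support x) ≤ ‖x' - x‖ ∧
    0 < sInf ((fun j => |x j|) '' Function.support x) := by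
  obtain ⟨j, hjx, hjx'⟩ := Set.exists_mem_notMem_of_ncard_le_of_ne (hx ▸ hx') hsupp
  have hfin : ((fun j => |x j|) '' Function.support x).Finite := (Set.toFinite _).image _
  refine ⟨?_, ?_⟩
  · calc sInf ((fun j => |x j|) '' Function.support x)
        ≤ |x j| := csInf_le hfin.bddBelow ⟨j, hjx, rfl⟩
      _ ≤ ‖x' - x‖ :=
        PiLp.norm_apply_le_norm_sub_of_apply_eq_zero (Function.notMem_support.1 hjx')
  · exact (hfin.lt_csInf_iff ⟨_, j, hjx, rfl⟩).2 fun _ ⟨i, hi, hie⟩ => hie ▸ abs_pos.2 hi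

/-- If `‖x‖₀ = s`, `‖x'‖₀ ≤ s`, and `supp(x') ≠ supp(x)`, then the Euclidean distance
between `x'` and `x` is at least `min_{j ∈ supp(x)} |x_j|`, which is positive. -/
theorem dist_ge_min_abs_of_support_ne {n : ℕ} (s : ℕ) (hs : 1 ≤ s)
    (x x' : EuclideanSpace ℝ (Fin n))
    (hx : (Function.support x).ncard = s)
    (hx' : (Function.support x').ncard ≤ s)
    (hsupp : Function.support x' ≠ Function.support x) :
    sInf ((fun j => |x j|) '' Function.support x) ≤ ‖x' - x‖ ∧
    0 < sInf ((fun j => |x j|) '' Function.support x) :=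
  dist_ge_min_abs_of_support_ne_general s x x' hx hx' hsupp
end
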